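/- arXiv:1810.03562 — 5 statements merged into one kernel-verified Lean document; each statement's English description precedes it below -/
import Mathlib

section
/- Let M* be a perfect matching of G of minimum weight and let ε > 0. If a perfect matching M satisfies the ε-complementary-slackness condition with a price function p : V → ℝ, then w(M*) ≤ w(M) ≤ w(M*) + n·ε. -/
/-!
Since `M* u` is a neighbour of `u`, ε-complementary slackness gives
`w(u, M u) - p(M u) ≤ w(u, M* u) - p(M* u) + ε` for every `u`. Summing over `u`, the prices
cancel because both matchings cover every vertex of `V` exactly once, which leaves
`w(M) ≤ w(M*) + n·ε`; the other inequality is the minimality of `M*`.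
-/

open Finset

theorem Equiv.sum_comp_eq_sum_comp {ι κ β : Type*} [Fintype ι] [AddCommMonoid β]
    (f : κ → β) (σ τ : ι ≃ κ) : ∑ i, f (σ i) = ∑ i, f (τ i) := by
  simpa using Equiv.sum_comp (σ.trans τ.symm) (fun i => f (τ i))

theorem sum_le_sum_add_card_mul_of_reducedCost_le {ι κ : Type*} [Fintype ι] {ε : ℝ}
    (c : ι → κ → ℝ) (p : κ → ℝ) (σ τ : ι ≃ κ)
    (h : ∀ i, c i (σ i) - p (σ i) ≤ c i (τ i) - p (τ i) + ε) :
    ∑ i, c i (σ i) ≤ ∑ i, c i (τ i) + Fintype.card ι * ε := by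
  have hsum := sum_le_sum fun i (_ : i ∈ univ) => h i
  simp only [sum_sub_distrib, sum_add_distrib, sum_const, card_univ, nsmul_eq_mul,
    Equiv.sum_comp_eq_sum_comp p σ τ] at hsum
  linarith

theorem min_matching_eps_CS_bound_general
    {U V : Type*} [Fintype U] [DecidableEq U]
    (n : ℕ) (hU : Fintype.card U = n)
    (E : Finset (U × V)) (w : U × V → ℤ) (p : V → ℝ)
    (ε : ℝ)
    (Mstar M : U ≃ V)
    (hMstar : ∀ u : U, (u, Mstar u) ∈ E)
    (hM : ∀ u : U, (u, M u) ∈ E)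
    -- `M*` is of minimum weight among perfect matchings
    (hmin : ∀ M' : U ≃ V, (∀ u : U, (u, M' u) ∈ E) →
      (∑ u : U, w (u, Mstar u)) ≤ ∑ u : U, w (u, M' u))
    -- ε-complementary slackness: for every matched edge `u (M u)`,
    -- `w'(u, M u) ≤ min_{z ∈ N(u)} w'(u, z) + ε`
    (hCS : ∀ u : U, (w (u, M u) : ℝ) - p (M u) ≤
      (E.filter (fun e => e.1 = u)).inf'
        ⟨(u, M u), Finset.mem_filter.mpr ⟨hM u, rfl⟩⟩
        (fun e => (w e : ℝ) - p e.2) + ε) :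
    (∑ u : U, w (u, Mstar u)) ≤ (∑ u : U, w (u, M u)) ∧
    ((∑ u : U, w (u, M u)) : ℝ) ≤ ((∑ u : U, w (u, Mstar u)) : ℝ) + n * ε := by
  refine ⟨hmin M hM, ?_⟩
  have hreduced (u : U) :
      (w (u, M u) : ℝ) - p (M u) ≤ (w (u, Mstar u) : ℝ) - p (Mstar u) + ε :=
    (hCS u).trans <| by
      gcongr
      exact inf'_le _ (mem_filter.mpr ⟨hMstar u, rfl⟩ : (u, Mstar u) ∈ E.filter (·.1 = u))
  simpa [hU] using
    sum_le_sum_add_card_mul_of_reducedCost_le (fun u v => (w (u, v) : ℝ)) p M Mstar hreduced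

/-- If `M*` is a minimum-weight perfect matching and a perfect matching `M`
satisfies the ε-complementary-slackness condition with prices `p : V → ℝ`, then
`w(M*) ≤ w(M) ≤ w(M*) + n·ε`. A perfect matching is modeled as a bijection `U ≃ V`
whose graph consists of edges of `E ⊆ U × V`; the neighbors of `u` correspond to the
edges of `E` with first coordinate `u`. -/
theorem min_matching_eps_CS_bound
    {U V : Type*} [Fintype U] [Fintype V] [DecidableEq U] [DecidableEq V]
    (n : ℕ) (hU : Fintype.card U = n) (hV : Fintype.card V = n)
    (E : Finset (U × V)) (w : U × V → ℤ) (p : V → ℝ)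
    (ε : ℝ) (hε : 0 < ε)
    (Mstar M : U ≃ V)
    (hMstar : ∀ u : U, (u, Mstar u) ∈ E)
    (hM : ∀ u : U, (u, M u) ∈ E)
    -- `M*` is of minimum weight among perfect matchings
    (hmin : ∀ M' : U ≃ V, (∀ u : U, (u, M' u) ∈ E) →
      (∑ u : U, w (u, Mstar u)) ≤ ∑ u : U, w (u, M' u))
    -- ε-complementary slackness: for every matched edge `u (M u)`,
    -- `w'(u, M u) ≤ min_{z ∈ N(u)} w'(u, z) + ε`
    (hCS : ∀ u : U, (w (u, M u) : ℝ) - p (M u) ≤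
      (E.filter (fun e => e.1 = u)).inf'
        ⟨(u, M u), Finset.mem_filter.mpr ⟨hM u, rfl⟩⟩
        (fun e => (w e : ℝ) - p e.2) + ε) :
    (∑ u : U, w (u, Mstar u)) ≤ (∑ u : U, w (u, M u)) ∧
    ((∑ u : U, w (u, M u)) : ℝ) ≤ ((∑ u : U, w (u, Mstar u)) : ℝ) + n * ε :=
  min_matching_eps_CS_bound_general n hU E w p ε Mstar M hMstar hM hmin hCS
end

section
/- If a perfect matching M of G and a price function p : V → ℝ satisfy the ε-complementary-slackness condition for some ε with 0 < ε < 1/n, then M is a perfect matching of minimum weight. -/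
open Finset

/-!
Summing the ε-CS inequality `w(u, M u) - p(M u) ≤ w(u, M' u) - p(M' u) + ε` over `u`, the
prices cancel because `M` and `M'` are both bijections onto `V`; hence
`w(M) ≤ w(M') + n ε < w(M') + 1`, and integrality of the weights gives `w(M) ≤ w(M')`.
-/

theorem Equiv.sum_comp_eq_sum_comp_s1 {U V M : Type*} [Fintype U] [AddCommMonoid M]
    (e e' : U ≃ V) (f : V → M) : ∑ u, f (e u) = ∑ u, f (e' u) := by
  simpa using Equiv.sum_comp (e.trans e'.symm) (fun u => f (e' u))

theorem sum_le_sum_add_card_mul_of_reduced_le {U V : Type*} [Fintype U] (M M' : U ≃ V)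
    (f g : U → ℝ) (p : V → ℝ) (ε : ℝ) (h : ∀ u, f u - p (M u) ≤ g u - p (M' u) + ε) :
    ∑ u, f u ≤ ∑ u, g u + Fintype.card U * ε := by
  have hsum := sum_le_sum fun u (_ : u ∈ univ) => h u
  rw [sum_add_distrib, sum_sub_distrib, sum_sub_distrib, sum_const, card_univ, nsmul_eq_mul,
    M.sum_comp_eq_sum_comp_s1 M' p] at hsum
  linarith

theorem Nat.cast_mul_lt_one_of_lt_one_div {n : ℕ} {ε : ℝ} (h : ε < 1 / n) : n * ε < 1 := by
  rcases n.eq_zero_or_pos with rfl | hn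
  · simp
  · rwa [lt_div_iff₀ (by positivity), mul_comm] at h

theorem Int.le_of_cast_le_add_of_lt_one {a b : ℤ} {δ : ℝ} (h : (a : ℝ) ≤ b + δ) (hδ : δ < 1) :
    a ≤ b := by
  have : (a : ℝ) < (b + 1 : ℤ) := by push_cast; linarith
  exact Int.lt_add_one_iff.mp (mod_cast this)

theorem eps_CS_small_eps_optimal_general
    {U V : Type*} [Fintype U] [DecidableEq U]
    (n : ℕ) (hU : Fintype.card U = n)
    (E : Finset (U × V)) (w : U × V → ℤ) (p : V → ℝ)
    (ε : ℝ) (hεn : ε < 1 / (n : ℝ))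
    (M : U ≃ V)
    (hM : ∀ u : U, (u, M u) ∈ E)
    -- ε-complementary slackness
    (hCS : ∀ u : U, (w (u, M u) : ℝ) - p (M u) ≤
      (E.filter (fun e => e.1 = u)).inf'
        ⟨(u, M u), Finset.mem_filter.mpr ⟨hM u, rfl⟩⟩
        (fun e => (w e : ℝ) - p e.2) + ε) :
    ∀ M' : U ≃ V, (∀ u : U, (u, M' u) ∈ E) →
      (∑ u : U, w (u, M u)) ≤ ∑ u : U, w (u, M' u) := by
  intro M' hM'
  have hreduced (u : U) : (w (u, M u) : ℝ) - p (M u) ≤ (w (u, M' u) : ℝ) - p (M' u) + ε := by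
    have hmem : (u, M' u) ∈ E.filter (fun e => e.1 = u) := mem_filter.mpr ⟨hM' u, rfl⟩
    exact (hCS u).trans <| add_le_add_left (inf'_le (fun e => (w e : ℝ) - p e.2) hmem) ε
  have hweight := sum_le_sum_add_card_mul_of_reduced_le M M' _ _ p ε hreduced
  rw [hU] at hweight
  exact Int.le_of_cast_le_add_of_lt_one (by push_cast; exact hweight)
    (Nat.cast_mul_lt_one_of_lt_one_div hεn)

/-- If a perfect matching `M` and prices `p : V → ℝ` satisfy the
ε-complementary-slackness condition for some `0 < ε < 1/n`, then `M` is a perfect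
matching of minimum weight. Perfect matchings are modeled as bijections `U ≃ V`
whose graphs consist of edges of `E ⊆ U × V`. -/
theorem eps_CS_small_eps_optimal
    {U V : Type*} [Fintype U] [Fintype V] [DecidableEq U] [DecidableEq V]
    (n : ℕ) (hU : Fintype.card U = n) (hV : Fintype.card V = n)
    (E : Finset (U × V)) (w : U × V → ℤ) (p : V → ℝ)
    (ε : ℝ) (hε : 0 < ε) (hεn : ε < 1 / (n : ℝ))
    (M : U ≃ V)
    (hM : ∀ u : U, (u, M u) ∈ E)
    -- ε-complementary slackness
    (hCS : ∀ u : U, (w (u, M u) : ℝ) - p (M u) ≤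
      (E.filter (fun e => e.1 = u)).inf'
        ⟨(u, M u), Finset.mem_filter.mpr ⟨hM u, rfl⟩⟩
        (fun e => (w e : ℝ) - p e.2) + ε) :
    ∀ M' : U ≃ V, (∀ u : U, (u, M' u) ∈ E) →
      (∑ u : U, w (u, M u)) ≤ ∑ u : U, w (u, M' u) :=
  eps_CS_small_eps_optimal_general n hU E w p ε hεn M hM hCS
end

section
/- If a perfect matching M of G satisfies the ε-complementary-slackness condition with a price function p : V → ℝ for some ε > 0, then for every perfect matching M' of G one has Σ_{uv ∈ M} (w(uv) − p(v)) ≤ Σ_{uv ∈ M'} (w(uv) − p(v)) + n·ε, and consequently w(M) ≤ w(M') + n·ε. -/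
/-! Complementary slackness compares the edge `u M(u)` with every edge at `u`, in particular with
`u M'(u)`, so each vertex of `U` loses at most `ε` in reduced cost; summing over the `n` vertices
gives the first bound. Both matchings are bijections onto `V`, so each subtracts the total price
`Σ_v p(v)` exactly once, and the second bound follows. -/

open Finset

theorem Finset.le_add_of_le_inf'_add {ι α : Type*} [SemilatticeInf α] [Add α] [AddRightMono α]
    {s : Finset ι} {H : s.Nonempty} {f : ι → α} {a ε : α} {i : ι}
    (ha : a ≤ s.inf' H f + ε) (hi : i ∈ s) : a ≤ f i + ε :=
  ha.trans (add_le_add_left (inf'_le f hi) ε)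

theorem Finset.sum_le_sum_add_card_nsmul {ι M : Type*} [AddCommMonoid M] [PartialOrder M]
    [IsOrderedAddMonoid M] {s : Finset ι} {f g : ι → M} {ε : M}
    (h : ∀ i ∈ s, f i ≤ g i + ε) : ∑ i ∈ s, f i ≤ ∑ i ∈ s, g i + #s • ε := by
  simpa only [sum_add_distrib, sum_const] using sum_le_sum h

theorem Equiv.sum_sub_comp {U V R : Type*} [Fintype U] [Fintype V] [AddCommGroup R]
    (M : U ≃ V) (c : U → R) (p : V → R) : ∑ u, (c u - p (M u)) = ∑ u, c u - ∑ v, p v := by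
  rw [sum_sub_distrib, M.sum_comp p]

theorem eps_CS_reduced_cost_bound_general
    {U V : Type*} [Fintype U] [Fintype V] [DecidableEq U]
    (n : ℕ) (hU : Fintype.card U = n)
    (E : Finset (U × V)) (w : U × V → ℤ) (p : V → ℝ)
    (ε : ℝ)
    (M : U ≃ V)
    (hM : ∀ u : U, (u, M u) ∈ E)
    -- ε-complementary slackness
    (hCS : ∀ u : U, (w (u, M u) : ℝ) - p (M u) ≤
      (E.filter (fun e => e.1 = u)).inf'
        ⟨(u, M u), Finset.mem_filter.mpr ⟨hM u, rfl⟩⟩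
        (fun e => (w e : ℝ) - p e.2) + ε) :
    ∀ M' : U ≃ V, (∀ u : U, (u, M' u) ∈ E) →
      (∑ u : U, ((w (u, M u) : ℝ) - p (M u))) ≤
        (∑ u : U, ((w (u, M' u) : ℝ) - p (M' u))) + n * ε ∧
      ((∑ u : U, w (u, M u)) : ℝ) ≤ ((∑ u : U, w (u, M' u)) : ℝ) + n * ε := by
  intro M' hM'
  have hreduced : ∑ u : U, ((w (u, M u) : ℝ) - p (M u)) ≤
      ∑ u : U, ((w (u, M' u) : ℝ) - p (M' u)) + n * ε := by
    have := sum_le_sum_add_card_nsmul fun u (_ : u ∈ univ) =>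
      le_add_of_le_inf'_add (hCS u) (mem_filter.mpr ⟨hM' u, rfl⟩)
    rwa [card_univ, hU, nsmul_eq_mul] at this
  refine ⟨hreduced, ?_⟩
  rw [M.sum_sub_comp, M'.sum_sub_comp] at hreduced
  linarith

/-- If a perfect matching `M` satisfies the ε-complementary-slackness
condition with prices `p : V → ℝ` for some `ε > 0`, then for every perfect matching `M'`,
`Σ_{uv ∈ M} (w(uv) − p(v)) ≤ Σ_{uv ∈ M'} (w(uv) − p(v)) + n·ε`, and consequently
`w(M) ≤ w(M') + n·ε`. -/
theorem eps_CS_reduced_cost_bound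
    {U V : Type*} [Fintype U] [Fintype V] [DecidableEq U] [DecidableEq V]
    (n : ℕ) (hU : Fintype.card U = n) (hV : Fintype.card V = n)
    (E : Finset (U × V)) (w : U × V → ℤ) (p : V → ℝ)
    (ε : ℝ) (hε : 0 < ε)
    (M : U ≃ V)
    (hM : ∀ u : U, (u, M u) ∈ E)
    -- ε-complementary slackness
    (hCS : ∀ u : U, (w (u, M u) : ℝ) - p (M u) ≤
      (E.filter (fun e => e.1 = u)).inf'
        ⟨(u, M u), Finset.mem_filter.mpr ⟨hM u, rfl⟩⟩
        (fun e => (w e : ℝ) - p e.2) + ε) :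
    ∀ M' : U ≃ V, (∀ u : U, (u, M' u) ∈ E) →
      (∑ u : U, ((w (u, M u) : ℝ) - p (M u))) ≤
        (∑ u : U, ((w (u, M' u) : ℝ) - p (M' u))) + n * ε ∧
      ((∑ u : U, w (u, M u)) : ℝ) ≤ ((∑ u : U, w (u, M' u)) : ℝ) + n * ε :=
  eps_CS_reduced_cost_bound_general n hU E w p ε M hM hCS
end

section
/- Let 0 < ε < 1/n and let f be a flow of the unit-capacity assignment network that is ε-optimal with respect to some price function p : U ⊔ V → ℝ, meaning: for every edge uv ∈ E with f(uv) = 1 one has −w(uv) + p(v) − p(u) ≥ −ε, and for every edge uv ∈ E with f(uv) = 0 one has w(uv) + p(u) − p(v) ≥ 0. Then f is a flow of minimum weight, i.e., w(f) ≤ w(g) for every flow g of the network. -/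
/-!
Both flows send one unit out of every `u ∈ U` and into every `v ∈ V`, so the prices cancel when
`w(g) - w(f)` is rewritten as `∑ₑ c(e) (g(e) - f(e))` with reduced costs `c(e) = w(e) + p(u) - p(v)`.
ε-optimality bounds every summand below by `-ε f(e)`, hence `w(g) - w(f) ≥ -ε n > -1`, and
integrality of the weights gives `w(g) - w(f) ≥ 0`.
-/

open Finset

theorem sum_mul_comp_eq_of_sum_fiber_eq {α β R : Type*} [DecidableEq β] [CommSemiring R]
    (s : Finset α) (φ : α → β) (π : β → R) {f g : α → R}
    (h : ∀ b, ∑ a ∈ s with φ a = b, f a = ∑ a ∈ s with φ a = b, g a) :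
    ∑ a ∈ s, π (φ a) * f a = ∑ a ∈ s, π (φ a) * g a := by
  have regroup (k : α → R) :
      ∑ a ∈ s, π (φ a) * k a = ∑ b ∈ s.image φ, π b * ∑ a ∈ s with φ a = b, k a := by
    rw [← sum_fiberwise_of_maps_to fun a ha => mem_image_of_mem φ ha]
    refine sum_congr rfl fun b _ => ?_
    rw [mul_sum]
    exact sum_congr rfl fun a ha => by rw [(mem_filter.mp ha).2]
  simp only [regroup, h]

theorem sum_eq_card_of_sum_fiber_eq_one {α β R : Type*} [DecidableEq β] [Fintype β]
    [AddCommMonoidWithOne R] (s : Finset α) (φ : α → β) {f : α → R}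
    (h : ∀ b, ∑ a ∈ s with φ a = b, f a = 1) :
    ∑ a ∈ s, f a = Fintype.card β := by
  rw [← sum_fiberwise s φ f]
  simp [h]

section Assignment

variable {U V : Type*} [DecidableEq U] [DecidableEq V]

theorem sum_mul_sub_eq_sum_reducedCost_mul_sub (E : Finset (U × V)) (w : U × V → ℝ)
    (pU : U → ℝ) (pV : V → ℝ) {f g : U × V → ℝ}
    (hU : ∀ u, ∑ e ∈ E with e.1 = u, f e = ∑ e ∈ E with e.1 = u, g e)
    (hV : ∀ v, ∑ e ∈ E with e.2 = v, f e = ∑ e ∈ E with e.2 = v, g e) :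
    ∑ e ∈ E, w e * (g e - f e) = ∑ e ∈ E, (w e + pU e.1 - pV e.2) * (g e - f e) := by
  have hpU : ∑ e ∈ E, pU e.1 * (g e - f e) = 0 := by
    simp only [mul_sub, sum_sub_distrib, sum_mul_comp_eq_of_sum_fiber_eq E Prod.fst pU hU, sub_self]
  have hpV : ∑ e ∈ E, pV e.2 * (g e - f e) = 0 := by
    simp only [mul_sub, sum_sub_distrib, sum_mul_comp_eq_of_sum_fiber_eq E Prod.snd pV hV, sub_self]
  simp only [add_mul, sub_mul, sum_add_distrib, sum_sub_distrib, hpU, hpV, add_zero, sub_zero]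

end Assignment

theorem neg_mul_le_mul_sub_of_eps_optimal {c ε : ℝ} {x y : ℤ} (hε : 0 ≤ ε) (hx : 0 ≤ x ∧ x ≤ 1)
    (hy : 0 ≤ y ∧ y ≤ 1) (hrev : x = 1 → c ≤ ε) (hfwd : x = 0 → 0 ≤ c) :
    -ε * x ≤ c * (y - x) := by
  obtain ⟨hy0, hy1⟩ : (0 : ℝ) ≤ y ∧ (y : ℝ) ≤ 1 := by exact_mod_cast hy
  obtain ⟨hx0, hx1⟩ := hx
  interval_cases x
  · push_cast; nlinarith [hfwd rfl]
  · push_cast; nlinarith [hrev rfl, mul_nonneg hε hy0]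

theorem mul_lt_one_of_lt_one_div {K : Type*} [Field K] [LinearOrder K] [IsStrictOrderedRing K]
    {a b : K} (hb : 0 ≤ b) (h : a < 1 / b) : a * b < 1 := by
  rcases hb.eq_or_lt with rfl | hb
  · simp
  · rwa [lt_div_iff₀ hb] at h

theorem eps_optimal_flow_min_weight_general
    {U V : Type*} [Fintype U] [DecidableEq U] [DecidableEq V]
    (n : ℕ) (hU : Fintype.card U = n)
    (E : Finset (U × V)) (w : U × V → ℤ)
    (ε : ℝ) (hε : 0 < ε) (hεn : ε < 1 / (n : ℝ))
    (f : U × V → ℤ) (hf01 : ∀ e ∈ E, 0 ≤ f e ∧ f e ≤ 1)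
    -- `f` is a flow: every vertex has zero excess
    (hflowU : ∀ u : U, (1 : ℤ) + 0 - ∑ e ∈ E.filter (fun e => e.1 = u), f e = 0)
    (hflowV : ∀ v : V, (-1 : ℤ) + (∑ e ∈ E.filter (fun e => e.2 = v), f e) - 0 = 0)
    (pU : U → ℝ) (pV : V → ℝ)
    -- ε-optimality: reversed residual arcs have reduced cost ≥ −ε
    (hrev : ∀ e ∈ E, f e = 1 → -(w e : ℝ) + pV e.2 - pU e.1 ≥ -ε)
    -- forward residual arcs have reduced cost ≥ 0
    (hfwd : ∀ e ∈ E, f e = 0 → (w e : ℝ) + pU e.1 - pV e.2 ≥ 0) :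
    ∀ g : U × V → ℤ, (∀ e ∈ E, 0 ≤ g e ∧ g e ≤ 1) →
      (∀ u : U, (1 : ℤ) + 0 - ∑ e ∈ E.filter (fun e => e.1 = u), g e = 0) →
      (∀ v : V, (-1 : ℤ) + (∑ e ∈ E.filter (fun e => e.2 = v), g e) - 0 = 0) →
      (∑ e ∈ E, w e * f e) ≤ ∑ e ∈ E, w e * g e := by
  intro g hg01 hgU hgV
  have hfU (u : U) : ∑ e ∈ E with e.1 = u, (f e : ℝ) = 1 := by
    exact_mod_cast (by linarith [hflowU u] : ∑ e ∈ E with e.1 = u, f e = 1)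
  have hgU' (u : U) : ∑ e ∈ E with e.1 = u, (g e : ℝ) = 1 := by
    exact_mod_cast (by linarith [hgU u] : ∑ e ∈ E with e.1 = u, g e = 1)
  have hfgV (v : V) : ∑ e ∈ E with e.2 = v, (f e : ℝ) = ∑ e ∈ E with e.2 = v, (g e : ℝ) := by
    exact_mod_cast (by linarith [hflowV v, hgV v] :
      ∑ e ∈ E with e.2 = v, f e = ∑ e ∈ E with e.2 = v, g e)
  have hsumf : ∑ e ∈ E, (f e : ℝ) = n := by
    rw [sum_eq_card_of_sum_fiber_eq_one E Prod.fst hfU, hU]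
  have hedge (e) (he : e ∈ E) :
      -ε * f e ≤ ((w e : ℝ) + pU e.1 - pV e.2) * (g e - f e) :=
    neg_mul_le_mul_sub_of_eps_optimal hε.le (hf01 e he) (hg01 e he)
      (fun h => by linarith [hrev e he h]) (hfwd e he)
  have hgap : (-1 : ℝ) < ((∑ e ∈ E, w e * g e - ∑ e ∈ E, w e * f e : ℤ) : ℝ) :=
    calc (-1 : ℝ) < -ε * n := by linarith [mul_lt_one_of_lt_one_div n.cast_nonneg hεn]
      _ = ∑ e ∈ E, -ε * f e := by rw [← mul_sum, hsumf]
      _ ≤ ∑ e ∈ E, ((w e : ℝ) + pU e.1 - pV e.2) * (g e - f e) := sum_le_sum hedge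
      _ = ∑ e ∈ E, (w e : ℝ) * (g e - f e) :=
        (sum_mul_sub_eq_sum_reducedCost_mul_sub E _ pU pV
          (fun u => (hfU u).trans (hgU' u).symm) hfgV).symm
      _ = _ := by push_cast; rw [← sum_sub_distrib]; simp only [mul_sub]
  have : (-1 : ℤ) < ∑ e ∈ E, w e * g e - ∑ e ∈ E, w e * f e := by exact_mod_cast hgap
  omega

/-- Let `0 < ε < 1/n` and let `f` be a flow of the unit-capacity
assignment network that is ε-optimal with respect to prices `p` on `U ⊔ V`
(modeled as `pU : U → ℝ` and `pV : V → ℝ`): every edge with `f = 1` satisfies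
`−w(uv) + p(v) − p(u) ≥ −ε` and every edge with `f = 0` satisfies
`w(uv) + p(u) − p(v) ≥ 0`. Then `f` is a flow of minimum weight. -/
theorem eps_optimal_flow_min_weight
    {U V : Type*} [Fintype U] [Fintype V] [DecidableEq U] [DecidableEq V]
    (n : ℕ) (hU : Fintype.card U = n) (hV : Fintype.card V = n)
    (E : Finset (U × V)) (w : U × V → ℤ)
    (ε : ℝ) (hε : 0 < ε) (hεn : ε < 1 / (n : ℝ))
    (f : U × V → ℤ) (hf01 : ∀ e ∈ E, 0 ≤ f e ∧ f e ≤ 1)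
    -- `f` is a flow: every vertex has zero excess
    (hflowU : ∀ u : U, (1 : ℤ) + 0 - ∑ e ∈ E.filter (fun e => e.1 = u), f e = 0)
    (hflowV : ∀ v : V, (-1 : ℤ) + (∑ e ∈ E.filter (fun e => e.2 = v), f e) - 0 = 0)
    (pU : U → ℝ) (pV : V → ℝ)
    -- ε-optimality: reversed residual arcs have reduced cost ≥ −ε
    (hrev : ∀ e ∈ E, f e = 1 → -(w e : ℝ) + pV e.2 - pU e.1 ≥ -ε)
    -- forward residual arcs have reduced cost ≥ 0
    (hfwd : ∀ e ∈ E, f e = 0 → (w e : ℝ) + pU e.1 - pV e.2 ≥ 0) :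
    ∀ g : U × V → ℤ, (∀ e ∈ E, 0 ≤ g e ∧ g e ≤ 1) →
      (∀ u : U, (1 : ℤ) + 0 - ∑ e ∈ E.filter (fun e => e.1 = u), g e = 0) →
      (∀ v : V, (-1 : ℤ) + (∑ e ∈ E.filter (fun e => e.2 = v), g e) - 0 = 0) →
      (∑ e ∈ E, w e * f e) ≤ ∑ e ∈ E, w e * g e :=
  eps_optimal_flow_min_weight_general n hU E w ε hε hεn f hf01 hflowU hflowV pU pV hrev hfwd
end

section
/- Suppose a perfect matching M of G and prices p : V → ℝ satisfy the ε-complementary-slackness condition for some ε > 0, and extend p to U by setting p(u) = −min_{z ∈ N(u)} (w(uz) − p(z)) for each u ∈ U. Then the 0/1 flow f induced by M (f(uv) = 1 iff uv ∈ M) is ε-optimal with respect to the extended prices: for every uv ∈ M, −w(uv) + p(v) − p(u) ≥ −ε, and for every edge uv ∉ M, w(uv) + p(u) − p(v) ≥ 0. -/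
theorem eps_CS_implies_eps_optimal_flow_general
    {U V : Type*} [DecidableEq U]
    (E : Finset (U × V)) (w : U × V → ℤ) (p : V → ℝ)
    (ε : ℝ)
    (M : U ≃ V)
    (hM : ∀ u : U, (u, M u) ∈ E)
    -- ε-complementary slackness
    (hCS : ∀ u : U, (w (u, M u) : ℝ) - p (M u) ≤
      (E.filter (fun e => e.1 = u)).inf'
        ⟨(u, M u), Finset.mem_filter.mpr ⟨hM u, rfl⟩⟩
        (fun e => (w e : ℝ) - p e.2) + ε)
    -- extended prices on `U`
    (pU : U → ℝ)
    (hpU : ∀ u : U, pU u = -((E.filter (fun e => e.1 = u)).inf'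
        ⟨(u, M u), Finset.mem_filter.mpr ⟨hM u, rfl⟩⟩
        (fun e => (w e : ℝ) - p e.2))) :
    (∀ u : U, -(w (u, M u) : ℝ) + p (M u) - pU u ≥ -ε) ∧
    (∀ e ∈ E, e.2 ≠ M e.1 → (w e : ℝ) + pU e.1 - p e.2 ≥ 0) := by
  refine ⟨fun u => by linarith [hCS u, hpU u], fun ⟨u, v⟩ he _ => ?_⟩
  have hle : (E.filter (fun e => e.1 = u)).inf' ⟨(u, M u), Finset.mem_filter.mpr ⟨hM u, rfl⟩⟩
      (fun e => (w e : ℝ) - p e.2) ≤ (w (u, v) : ℝ) - p v :=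
    Finset.inf'_le (s := E.filter (fun e => e.1 = u)) _ (Finset.mem_filter.mpr ⟨he, rfl⟩)
  linarith [hpU u]

/-- If a perfect matching `M` and prices `p : V → ℝ` satisfy the
ε-complementary-slackness condition and we extend the prices to `U` by
`p(u) = −min_{z ∈ N(u)} (w(uz) − p(z))`, then the 0/1 flow induced by `M` is ε-optimal
with respect to the extended prices: for every matched edge `−w(uv) + p(v) − p(u) ≥ −ε`,
and for every unmatched edge `w(uv) + p(u) − p(v) ≥ 0`. -/
theorem eps_CS_implies_eps_optimal_flow
    {U V : Type*} [Fintype U] [Fintype V] [DecidableEq U] [DecidableEq V]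
    (n : ℕ) (hU : Fintype.card U = n) (hV : Fintype.card V = n)
    (E : Finset (U × V)) (w : U × V → ℤ) (p : V → ℝ)
    (ε : ℝ) (hε : 0 < ε)
    (M : U ≃ V)
    (hM : ∀ u : U, (u, M u) ∈ E)
    -- ε-complementary slackness
    (hCS : ∀ u : U, (w (u, M u) : ℝ) - p (M u) ≤
      (E.filter (fun e => e.1 = u)).inf'
        ⟨(u, M u), Finset.mem_filter.mpr ⟨hM u, rfl⟩⟩
        (fun e => (w e : ℝ) - p e.2) + ε)
    -- extended prices on `U`
    (pU : U → ℝ)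
    (hpU : ∀ u : U, pU u = -((E.filter (fun e => e.1 = u)).inf'
        ⟨(u, M u), Finset.mem_filter.mpr ⟨hM u, rfl⟩⟩
        (fun e => (w e : ℝ) - p e.2))) :
    (∀ u : U, -(w (u, M u) : ℝ) + p (M u) - pU u ≥ -ε) ∧
    (∀ e ∈ E, e.2 ≠ M e.1 → (w e : ℝ) + pU e.1 - p e.2 ≥ 0) :=
  eps_CS_implies_eps_optimal_flow_general E w p ε M hM hCS pU hpU
end
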